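/- arXiv:1404.4079 — 2 statements merged into one kernel-verified Lean document; each statement's English description precedes it below -/
import Mathlib

section
/- (Tchakaloff) Let μ be a finite, positive, Borel measure on ℝ^q with compact support Z ⊂ ℝ^q, and let d ≥ 1 be a fixed positive integer. Then there exist p ≤ binomial(q + d, q) points z_1, …, z_p ∈ Z and positive weights w_1, …, w_p such that ∫ f dμ = Σ_{k=1}^{p} w_k f(z_k) for every polynomial f ∈ ℝ[z_1, …, z_q] of total degree at most d. -/
/-!
Let `φ v` be the vector of all monomials of degree at most `d` evaluated at `v`; it has
`binomial(q + d, q)` coordinates. The mean of `φ` over `μ` lies in the convex hull of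
`φ '' Z` (closed, as the convex hull of a compact set in finite dimension), so by Carathéodory
it is a positive convex combination of affinely independent points `φ (z k)` with `z k ∈ Z`.
All values of `φ` lie on the affine hyperplane where the constant monomial equals `1`, so these
points are even linearly independent, hence at most `binomial(q + d, q)` many. Scaling the
weights by `μ univ` gives a rule that is exact on every linear functional of `φ`, that is, on
every polynomial of degree `≤ d`.
-/

open MeasureTheory Set

section ConvexHull

variable {E : Type*} [NormedAddCommGroup E] [NormedSpace ℝ E] [FiniteDimensional ℝ E]

theorem exists_stdSimplex_sum_smul_of_mem_convexHull {s : Set E} {x : E}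
    (hx : x ∈ convexHull ℝ s) :
    ∃ w ∈ stdSimplex ℝ (Fin (Module.finrank ℝ E + 1)),
      ∃ y : Fin (Module.finrank ℝ E + 1) → E,
        (∀ i, y i ∈ s) ∧ ∑ i, w i • y i = x := by
  obtain ⟨s₀, hs₀⟩ := convexHull_nonempty_iff.1 ⟨x, hx⟩
  obtain ⟨ι, _, z, c, hz, hind, hpos, hsum, rfl⟩ := eq_pos_convex_span_of_mem_convexHull hx
  have hcard : Fintype.card ι ≤ Module.finrank ℝ E + 1 :=
    hind.card_le_finrank_succ.trans (Nat.succ_le_succ (Submodule.finrank_le _))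
  -- pad the Carathéodory combination with zero weights
  let e : ι ↪ Fin _ := (Fintype.equivFin ι).toEmbedding.trans (Fin.castLEEmb hcard)
  set w := Function.extend e c 0
  set y := Function.extend e z fun _ => s₀
  have hw_e (i : ι) : w (e i) = c i := e.injective.extend_apply _ _ _
  have hy_e (i : ι) : y (e i) = z i := e.injective.extend_apply _ _ _
  have hw_zero (j) (hj : j ∉ range e) : w j = 0 := Function.extend_apply' _ _ _ hj
  have hy_s₀ (j) (hj : j ∉ range e) : y j = s₀ := Function.extend_apply' _ _ _ hj
  refine ⟨w, ⟨fun j => ?_, ?_⟩, y, fun j => ?_, ?_⟩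
  · by_cases hj : j ∈ range e
    · obtain ⟨i, rfl⟩ := hj
      exact hw_e i ▸ (hpos i).le
    · exact (hw_zero j hj).ge
  · rw [← hsum]
    exact (Fintype.sum_of_injective e e.injective _ _ hw_zero fun i => (hw_e i).symm).symm
  · by_cases hj : j ∈ range e
    · obtain ⟨i, rfl⟩ := hj
      exact hy_e i ▸ hz (mem_range_self i)
    · exact hy_s₀ j hj ▸ hs₀
  · exact (Fintype.sum_of_injective e e.injective _ _ (fun j hj => by simp [hw_zero j hj])
      fun i => by rw [hw_e, hy_e]).symm

theorem IsCompact.isCompact_convexHull {s : Set E} (hs : IsCompact s) :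
    IsCompact (convexHull ℝ s) := by
  have : convexHull ℝ s = (fun p : (Fin (Module.finrank ℝ E + 1) → ℝ) × (Fin _ → E) =>
      ∑ i, p.1 i • p.2 i) '' (stdSimplex ℝ _ ×ˢ univ.pi fun _ => s) := by
    refine Subset.antisymm (fun x hx => ?_) ?_
    · obtain ⟨w, hw, y, hy, rfl⟩ := exists_stdSimplex_sum_smul_of_mem_convexHull hx
      exact ⟨(w, y), ⟨hw, fun i _ => hy i⟩, rfl⟩
    · rintro _ ⟨⟨w, y⟩, ⟨hw, hy⟩, rfl⟩
      exact (convex_convexHull ℝ s).sum_mem (fun i _ => hw.1 i) hw.2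
        fun i _ => subset_convexHull ℝ s (hy i (mem_univ i))
  rw [this]
  exact ((isCompact_stdSimplex ℝ _).prod (isCompact_univ_pi fun _ => hs)).image (by fun_prop)

end ConvexHull

theorem AffineIndependent.linearIndependent_of_map_eq_one {k V ι : Type*} [Ring k]
    [AddCommGroup V] [Module k V] {p : ι → V} (hp : AffineIndependent k p) (ℓ : V →ₗ[k] k)
    (hℓ : ∀ i, ℓ (p i) = 1) : LinearIndependent k p := by
  rw [linearIndependent_iff']
  intro s c hc
  have hsum : ∑ i ∈ s, c i = 0 := by simpa [hℓ] using congrArg ℓ hc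
  exact hp s c hsum (by rwa [s.weightedVSub_eq_linear_combination hsum])

theorem Sym.card_option_eq_choose (α : Type*) [Fintype α] [DecidableEq α] (d : ℕ) :
    Fintype.card (Sym (Option α) d) = (Fintype.card α + d).choose (Fintype.card α) := by
  rw [Sym.card_sym_eq_choose, Fintype.card_option, Nat.add_right_comm, Nat.add_sub_cancel,
    Nat.choose_symm_add]

theorem Sym.exists_count_some_eq {σ : Type*} [DecidableEq σ] (d : ℕ) {m : σ →₀ ℕ}
    (hm : (m.sum fun _ e => e) ≤ d) :
    ∃ s : Sym (Option σ) d, ∀ i, Multiset.count (some i) s = m i := by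
  refine ⟨⟨m.toMultiset.map some + Multiset.replicate (d - m.sum fun _ e => e) none, ?_⟩,
    fun i => ?_⟩
  · simp only [Multiset.card_add, Multiset.card_map, Finsupp.card_toMultiset,
      Multiset.card_replicate]
    exact Nat.add_sub_cancel' hm
  · simp [Multiset.count_replicate, Multiset.count_map_eq_count' _ _ (Option.some_injective _)]

namespace MvPolynomial

variable {σ R : Type*} [Fintype σ] [DecidableEq σ] [CommSemiring R] (d : ℕ)

/-- A multiset of size `d` over `Option σ` is a monomial of degree at most `d` in the variables
`σ`, homogenized by the extra variable `none`. -/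
def monomialEvals (x : σ → R) (s : Sym (Option σ) d) : R :=
  ∏ i, x i ^ Multiset.count (some i) s

theorem continuous_monomialEvals [TopologicalSpace R] [IsTopologicalSemiring R] :
    Continuous (monomialEvals (σ := σ) (R := R) d) := by
  unfold monomialEvals
  fun_prop

theorem monomialEvals_replicate_none (x : σ → R) :
    monomialEvals d x (Sym.replicate d none) = 1 := by
  simp [monomialEvals, Sym.replicate, Multiset.count_replicate]

theorem exists_linearMap_monomialEvals_eq_eval {f : MvPolynomial σ R} (hf : f.totalDegree ≤ d) :
    ∃ L : (Sym (Option σ) d → R) →ₗ[R] R, ∀ x, L (monomialEvals d x) = eval x f := by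
  have hmon : ∀ m ∈ f.support, ∃ s : Sym (Option σ) d, ∀ x : σ → R,
      monomialEvals d x s = ∏ i, x i ^ m i := fun m hm => by
    obtain ⟨s, hs⟩ := Sym.exists_count_some_eq d ((le_totalDegree hm).trans hf)
    exact ⟨s, fun x => by simp only [monomialEvals, hs]⟩
  choose! s hs using hmon
  refine ⟨∑ m ∈ f.support, f.coeff m • LinearMap.proj (s m), fun x => ?_⟩
  simp only [LinearMap.sum_apply, LinearMap.smul_apply, LinearMap.proj_apply, smul_eq_mul,
    eval_eq']
  exact Finset.sum_congr rfl fun m hm => by rw [hs m hm]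

end MvPolynomial

section Quadrature

variable {X E : Type*} [MeasurableSpace X] [TopologicalSpace X] [OpensMeasurableSpace X]
  [NormedAddCommGroup E] [NormedSpace ℝ E] [FiniteDimensional ℝ E]

theorem exists_pos_quadrature_of_isCompact (μ : Measure X) [IsFiniteMeasure μ] {Z : Set X}
    (hZ : IsCompact Z) (hμZ : μ Zᶜ = 0) {φ : X → E} (hφ : Continuous φ) :
    ∃ (n : ℕ) (z : Fin n → X) (w : Fin n → ℝ), (∀ k, z k ∈ Z) ∧ (∀ k, 0 < w k) ∧
      AffineIndependent ℝ (φ ∘ z) ∧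
      ∀ L : E →ₗ[ℝ] ℝ, ∫ x, L (φ x) ∂μ = ∑ k, w k * L (φ (z k)) := by
  rcases eq_zero_or_neZero μ with rfl | hμ
  · exact ⟨0, Fin.elim0, Fin.elim0, Fin.rec0, Fin.rec0, affineIndependent_of_subsingleton _ _,
      fun L => by simp⟩
  have hae : ∀ᵐ x ∂μ, x ∈ Z := mem_ae_iff.2 hμZ
  obtain ⟨C, hC⟩ := hZ.exists_bound_of_continuousOn hφ.continuousOn
  have hint : Integrable φ μ := .of_bound hφ.aestronglyMeasurable C (hae.mono hC)
  have hmean : ⨍ x, φ x ∂μ ∈ convexHull ℝ (φ '' Z) :=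
    (convex_convexHull ℝ _).average_mem (hZ.image hφ).isCompact_convexHull.isClosed
      (hae.mono fun x hx => subset_convexHull ℝ _ (mem_image_of_mem φ hx)) hint
  obtain ⟨ι, _, y, c, hy, hind, hpos, -, hsum⟩ := eq_pos_convex_span_of_mem_convexHull hmean
  choose z hzZ hzy using fun i => hy (mem_range_self i)
  have hφz : φ ∘ z = y := funext hzy
  let e := (Fintype.equivFin ι).symm
  refine ⟨_, z ∘ e, fun k => μ.real univ * c (e k), fun k => hzZ _,
    fun k => mul_pos measureReal_univ_pos (hpos _), ?_, ?_⟩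
  · rw [← Function.comp_assoc, hφz]
    exact hind.comp_embedding e.toEmbedding
  · have hφ_int : ∫ x, φ x ∂μ = ∑ k, (μ.real univ * c (e k)) • φ (z (e k)) := by
      rw [← measure_smul_average, ← hsum, Finset.smul_sum, ← e.sum_comp]
      simp [smul_smul, hzy]
    intro L
    calc ∫ x, L (φ x) ∂μ = L (∫ x, φ x ∂μ) :=
          L.toContinuousLinearMap.integral_comp_comm hint
      _ = _ := by simp [hφ_int]

end Quadrature

theorem stmt3_general {q : ℕ} (μ : Measure (EuclideanSpace ℝ (Fin q))) [IsFiniteMeasure μ]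
    (Z : Set (EuclideanSpace ℝ (Fin q))) (hZ : IsCompact Z) (hsupp : μ Zᶜ = 0)
    (d : ℕ) :
    ∃ p : ℕ, p ≤ (q + d).choose q ∧
      ∃ (z : Fin p → EuclideanSpace ℝ (Fin q)) (w : Fin p → ℝ),
        (∀ k, z k ∈ Z) ∧ (∀ k, 0 < w k) ∧
        ∀ f : MvPolynomial (Fin q) ℝ, f.totalDegree ≤ d →
          ∫ v, MvPolynomial.eval (fun i => v i) f ∂μ =
            ∑ k, w k * MvPolynomial.eval (fun i => z k i) f := by
  obtain ⟨p, z, w, hzZ, hw, hind, hquad⟩ := exists_pos_quadrature_of_isCompact μ hZ hsupp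
    ((MvPolynomial.continuous_monomialEvals d).comp (PiLp.continuous_ofLp 2 _))
  refine ⟨p, ?_, z, w, hzZ, hw, fun f hf => ?_⟩
  · have hlin := hind.linearIndependent_of_map_eq_one
      (LinearMap.proj (R := ℝ) (Sym.replicate d none))
      fun k => MvPolynomial.monomialEvals_replicate_none d (z k).ofLp
    simpa [Sym.card_option_eq_choose] using hlin.fintype_card_le_finrank
  · obtain ⟨L, hL⟩ := MvPolynomial.exists_linearMap_monomialEvals_eq_eval d hf
    simpa only [Function.comp_apply, hL] using hquad L

/-- **Tchakaloff.** Let `μ` be a finite positive Borel measure with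
compact support `Z ⊂ ℝ^q` and let `d ≥ 1`. Then there exist `p ≤ binom(q+d, q)`
points `z_k ∈ Z` and positive weights `w_k` such that
`∫ f dμ = Σ_k w_k f(z_k)` for every polynomial `f` of total degree at most `d`. -/
theorem stmt3 {q : ℕ} (μ : Measure (EuclideanSpace ℝ (Fin q))) [IsFiniteMeasure μ]
    (Z : Set (EuclideanSpace ℝ (Fin q))) (hZ : IsCompact Z) (hsupp : μ Zᶜ = 0)
    (d : ℕ) (hd : 1 ≤ d) :
    ∃ p : ℕ, p ≤ (q + d).choose q ∧
      ∃ (z : Fin p → EuclideanSpace ℝ (Fin q)) (w : Fin p → ℝ),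
        (∀ k, z k ∈ Z) ∧ (∀ k, 0 < w k) ∧
        ∀ f : MvPolynomial (Fin q) ℝ, f.totalDegree ≤ d →
          ∫ v, MvPolynomial.eval (fun i => v i) f ∂μ =
            ∑ k, w k * MvPolynomial.eval (fun i => z k i) f :=
  stmt3_general μ Z hZ hsupp d
end

section
/- Let Z ⊂ ℝ^q be compact, let μ be a finite positive Borel measure supported on Z, let r ∈ ℕ, and let y_α = ∫ z^α dμ for each multi-index α ∈ ℕ^q with |α| ≤ 2r. Then for every λ > 0 there exists ε > 0 such that for every finite ε-net Z_ε of Z there exists a positive measure μ̃ supported on the finite set Z_ε (i.e., a finite nonnegative combination of Dirac measures at points of Z_ε) satisfying |y_α − ∫ z^α dμ̃| ≤ λ for all multi-indices α with |α| ≤ 2r. In particular, the optimal value λ_ε* of the linear program minimizing λ subject to |y_α − ⟨z^α, μ̃⟩| ≤ λ for all |α| ≤ 2r over positive measures μ̃ on Z_ε tends to 0 as ε → 0. -/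
open MeasureTheory Set

/-!
Send each point of `Z` to a point of the `ε`-net within distance `ε` (chosen measurably, one
closed ball at a time) and push `μ` forward along this map: the image measure is carried by the
net, and since the finitely many monomials of degree `≤ 2r` are uniformly continuous on the
compact `Z`, moving mass by at most `ε` changes each of these moments by as little as we
like once `ε` is small.
-/

theorem IsCompact.exists_forall_dist_lt_of_continuousOn {X ι E : Type*} [PseudoMetricSpace X]
    [PseudoMetricSpace E] [Finite ι] {Z : Set X} (hZ : IsCompact Z) {f : ι → X → E}
    (hf : ∀ i, ContinuousOn (f i) Z) {η : ℝ} (hη : 0 < η) :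
    ∃ e > 0, ∀ x ∈ Z, ∀ y ∈ Z, dist x y < e → ∀ i, dist (f i x) (f i y) < η := by
  have := Fintype.ofFinite ι
  obtain ⟨e, he, hF⟩ := Metric.uniformContinuousOn_iff.mp
    (hZ.uniformContinuousOn_of_continuous (continuousOn_pi.mpr hf)) η hη
  exact ⟨e, he, fun x hx y hy hxy i => (dist_le_pi_dist _ _ i).trans_lt (hF x hx y hy hxy)⟩

theorem Finset.exists_measurable_nearby_point {X : Type*} [PseudoMetricSpace X]
    [MeasurableSpace X] [OpensMeasurableSpace X] (S : Finset X) (ε : ℝ) :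
    ∃ π : X → X, Measurable π ∧
      ∀ z, (∃ s ∈ S, dist z s ≤ ε) → π z ∈ S ∧ dist z (π z) ≤ ε := by
  classical
  induction S using Finset.induction_on with
  | empty => exact ⟨id, measurable_id, by simp⟩
  | insert a S _ ih =>
    obtain ⟨π, hπ, hπS⟩ := ih
    refine ⟨fun z => if z ∈ Metric.closedBall a ε then a else π z,
      measurable_const.ite measurableSet_closedBall hπ, fun z hz => ?_⟩
    by_cases ha : z ∈ Metric.closedBall a ε
    · simp only [if_pos ha]
      exact ⟨Finset.mem_insert_self a S, ha⟩
    · obtain ⟨s, hs, hzs⟩ := hz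
      have hsS : s ∈ S := by
        rcases Finset.mem_insert.mp hs with rfl | h
        · exact absurd (Metric.mem_closedBall.mpr hzs) ha
        · exact h
      simp only [if_neg ha]
      exact (hπS z ⟨s, hsS, hzs⟩).imp_left Finset.mem_insert_of_mem

section FinitelySupported

variable {X : Type*} [MeasurableSpace X] [MeasurableSingletonClass X] {ν : Measure X}
  [IsFiniteMeasure ν]

theorem integrableOn_finset (S : Finset X) (f : X → ℝ) : IntegrableOn f S ν := by
  rw [← biUnion_of_singleton (S : Set X)]
  exact integrableOn_finset_iUnion.mpr fun s _ => integrableOn_singleton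

theorem integrable_of_measure_compl_finset_eq_zero {S : Finset X} (hν : ν (↑S)ᶜ = 0)
    (f : X → ℝ) : Integrable f ν := by
  rw [← Measure.restrict_eq_self_of_ae_mem (ae_iff.mpr hν)]
  exact integrableOn_finset S f

theorem integral_eq_sum_of_measure_compl_finset_eq_zero {S : Finset X} (hν : ν (↑S)ᶜ = 0)
    (f : X → ℝ) : ∫ x, f x ∂ν = ∑ s ∈ S, ν.real {s} * f s := by
  have hνS : ν.restrict S = ν := Measure.restrict_eq_self_of_ae_mem (ae_iff.mpr hν)
  rw [← hνS, setIntegral_finset S (integrableOn_finset S f), hνS]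
  rfl

end FinitelySupported

theorem IsCompact.exists_measure_on_net_approx_integral {X ι : Type*} [MetricSpace X]
    [MeasurableSpace X] [OpensMeasurableSpace X] [Finite ι] {Z : Set X} (hZ : IsCompact Z)
    {f : ι → X → ℝ} (hf : ∀ i, Continuous (f i)) (μ : Measure X) [IsFiniteMeasure μ]
    (hμ : μ Zᶜ = 0) {δ : ℝ} (hδ : 0 < δ) :
    ∃ ε > 0, ∀ S : Finset X, ↑S ⊆ Z → (∀ z ∈ Z, ∃ s ∈ S, dist z s ≤ ε) →
      ∃ ν : Measure X, IsFiniteMeasure ν ∧ ν (↑S)ᶜ = 0 ∧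
        ∀ i, |∫ x, f i x ∂μ - ∫ x, f i x ∂ν| ≤ δ := by
  set η := δ / (μ.real univ + 1)
  have hη : 0 < η := div_pos hδ (by positivity)
  obtain ⟨e, he, hfe⟩ :=
    hZ.exists_forall_dist_lt_of_continuousOn (fun i => (hf i).continuousOn) hη
  refine ⟨e / 2, half_pos he, fun S hSZ hnet => ?_⟩
  obtain ⟨π, hπ, hπS⟩ := S.exists_measurable_nearby_point (e / 2)
  have hπZ : ∀ z ∈ Z, π z ∈ S ∧ dist z (π z) < e := fun z hz =>
    (hπS z (hnet z hz)).imp_right fun h => h.trans_lt (half_lt_self he)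
  have hμZ : ∀ᵐ z ∂μ, z ∈ Z := ae_iff.mpr hμ
  have hνS : μ.map π (↑S)ᶜ = 0 := by
    rw [Measure.map_apply hπ S.finite_toSet.measurableSet.compl]
    exact measure_mono_null (fun z hz hzZ => hz (hπZ z hzZ).1) hμ
  refine ⟨μ.map π, inferInstance, hνS, fun i => ?_⟩
  have hfπ : Integrable (fun z => f i (π z)) μ :=
    (integrable_map_measure (hf i).aestronglyMeasurable hπ.aemeasurable).mp
      (integrable_of_measure_compl_finset_eq_zero hνS (f i))
  have hfμ : Integrable (f i) μ := by
    rw [← Measure.restrict_eq_self_of_ae_mem hμZ]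
    exact (hf i).continuousOn.integrableOn_compact hZ
  have hclose : ∀ᵐ z ∂μ, ‖f i z - f i (π z)‖ ≤ η := hμZ.mono fun z hz =>
    (hfe z hz (π z) (hSZ (hπZ z hz).1) (hπZ z hz).2 i).le
  calc |∫ x, f i x ∂μ - ∫ x, f i x ∂μ.map π|
      = ‖∫ z, (f i z - f i (π z)) ∂μ‖ := by
        rw [integral_map hπ.aemeasurable (hf i).aestronglyMeasurable, integral_sub hfμ hfπ,
          Real.norm_eq_abs]
    _ ≤ η * μ.real univ := norm_integral_le_of_norm_le_const hclose
    _ ≤ δ := by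
        rw [div_mul_eq_mul_div, div_le_iff₀ (by positivity)]
        nlinarith [measureReal_nonneg (μ := μ) (s := univ)]

/-- Let `μ` be a finite positive Borel measure supported on a
compact set `Z ⊂ ℝ^q` with moments `y_α = ∫ z^α dμ` for `|α| ≤ 2r`. For every
`λ > 0` there is `ε > 0` such that on every finite `ε`-net `Z_ε ⊆ Z` of `Z`
there is a positive atomic measure (a nonnegative combination of Diracs at
points of `Z_ε`, described by its weights `w`) whose moments of total degree at
most `2r` differ from those of `μ` by at most `λ`. In particular the optimal
value `λ_ε*` of the corresponding LP tends to `0` as `ε → 0`. -/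
theorem stmt5 {q : ℕ} (Z : Set (EuclideanSpace ℝ (Fin q))) (hZ : IsCompact Z)
    (μ : Measure (EuclideanSpace ℝ (Fin q))) [IsFiniteMeasure μ]
    (hsupp : μ Zᶜ = 0) (r : ℕ) :
    ∀ lam : ℝ, 0 < lam → ∃ ε : ℝ, 0 < ε ∧
      ∀ S : Finset (EuclideanSpace ℝ (Fin q)), (↑S : Set (EuclideanSpace ℝ (Fin q))) ⊆ Z →
        (∀ z ∈ Z, ∃ s ∈ S, dist z s ≤ ε) →
        ∃ w : EuclideanSpace ℝ (Fin q) → ℝ, (∀ s, 0 ≤ w s) ∧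
          ∀ α : Fin q → ℕ, (∑ i, α i) ≤ 2 * r →
            |(∫ z, ∏ i, (z i : ℝ) ^ (α i) ∂μ) -
              ∑ s ∈ S, w s * ∏ i, (s i) ^ (α i)| ≤ lam := by
  intro lam hlam
  let Λ := {α : Fin q → ℕ // ∑ i, α i ≤ 2 * r}
  have : Finite Λ :=
    ((Set.finite_Iic fun _ => 2 * r).subset fun α hα i =>
      (Finset.single_le_sum (fun j _ => (α j).zero_le) (Finset.mem_univ i)).trans hα).to_subtype
  obtain ⟨ε, hε, happrox⟩ := hZ.exists_measure_on_net_approx_integral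
    (f := fun (α : Λ) z => ∏ i, z i ^ α.1 i) (fun α => by fun_prop) μ hsupp hlam
  refine ⟨ε, hε, fun S hSZ hnet => ?_⟩
  obtain ⟨ν, _, hνS, hν⟩ := happrox S hSZ hnet
  refine ⟨fun s => ν.real {s}, fun s => measureReal_nonneg, fun α hα => ?_⟩
  rw [← integral_eq_sum_of_measure_compl_finset_eq_zero hνS]
  exact hν ⟨α, hα⟩
end
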